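/- arXiv:2403.12673 — 4 statements merged into one kernel-verified Lean document; each statement's English description precedes it below -/
import Mathlib

section
/- Let (A, B, C) be a recollement of abelian categories in which A, B and C all have enough projectives and enough injectives and both i^* and i^! are exact, let n ≥ 1, let (T1, F1) and (T2, F2) be n-cotorsion pairs in A and C respectively, and let (T, F) be the glued pair in B. Then T^∨_{n-1} = {B ∈ B : i^*(B) ∈ (T1)^∨_{n-1} and j^*(B) ∈ (T2)^∨_{n-1}} and F^∧_{n-1} = {B ∈ B : i^!(B) ∈ (F1)^∧_{n-1} and j^*(B) ∈ (F2)^∧_{n-1}}. -/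
open CategoryTheory CategoryTheory.Limits CategoryTheory.Abelian ZeroObject

universe v u

namespace PaperRecollement

/-- The `k`-th Ext group of two objects in an abelian category,
as a type (it carries an `AddCommGroup` structure). -/
noncomputable def ExtGrp {D : Type u} [Category.{v} D] [Abelian D] (X Y : D) (k : ℕ) :
    Type (max u v) :=
  letI : HasDerivedCategory.{max u v} D := HasDerivedCategory.standard D
  letI : HasExt.{max u v} D := hasExt_of_hasDerivedCategory D
  Abelian.Ext X Y k

noncomputable instance {D : Type u} [Category.{v} D] [Abelian D] (X Y : D) (k : ℕ) :
    AddCommGroup (ExtGrp X Y k) :=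
  letI : HasDerivedCategory.{max u v} D := HasDerivedCategory.standard D
  letI : HasExt.{max u v} D := hasExt_of_hasDerivedCategory D
  inferInstanceAs (AddCommGroup (Abelian.Ext X Y k))

/-- `Ext^k(X, Y) = 0`. -/
def ExtVanish {D : Type u} [Category.{v} D] [Abelian D] (X Y : D) (k : ℕ) : Prop :=
  Subsingleton (ExtGrp X Y k)

/-- A functor between abelian categories is exact if it is additive and preserves
short exact sequences. -/
structure IsExactFunctor {A : Type u} {B : Type u} [Category.{v} A] [Category.{v} B]
    [Abelian A] [Abelian B] (F : A ⥤ B) : Prop where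
  additive : F.Additive
  preserves_shortExact : ∀ ⦃X Y Z : A⦄ (f : X ⟶ Y) (g : Y ⟶ Z) (w : f ≫ g = 0)
    (w' : F.map f ≫ F.map g = 0),
    (ShortComplex.mk f g w).ShortExact → (ShortComplex.mk (F.map f) (F.map g) w').ShortExact

/-- A recollement of abelian categories. -/
structure Recollement (A B C : Type u) [Category.{v} A] [Category.{v} B] [Category.{v} C]
    [Abelian A] [Abelian B] [Abelian C] where
  /-- `i_* : A ⥤ B` -/
  iStar : A ⥤ B
  /-- `i^* : B ⥤ A` -/
  iUStar : B ⥤ A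
  /-- `i^! : B ⥤ A` -/
  iShriek : B ⥤ A
  /-- `j^* : B ⥤ C` -/
  jUStar : B ⥤ C
  /-- `j_! : C ⥤ B` -/
  jShriek : C ⥤ B
  /-- `j_* : C ⥤ B` -/
  jStar : C ⥤ B
  adj₁ : iUStar ⊣ iStar
  adj₂ : iStar ⊣ iShriek
  adj₃ : jShriek ⊣ jUStar
  adj₄ : jUStar ⊣ jStar
  iUStar_additive : iUStar.Additive
  iShriek_additive : iShriek.Additive
  jShriek_additive : jShriek.Additive
  jStar_additive : jStar.Additive
  iStar_full : iStar.Full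
  iStar_faithful : iStar.Faithful
  jShriek_full : jShriek.Full
  jShriek_faithful : jShriek.Faithful
  jStar_full : jStar.Full
  jStar_faithful : jStar.Faithful
  iStar_exact : IsExactFunctor iStar
  jUStar_exact : IsExactFunctor jUStar
  essIm_iStar_eq_ker_jUStar : ∀ X : B,
    (∃ Y : A, Nonempty (iStar.obj Y ≅ X)) ↔ Nonempty (jUStar.obj X ≅ 0)

variable {D : Type u} [Category.{v} D] [Abelian D]

/-- `Z^∧_m` : objects with a `Z`-resolution of length `m`. -/
def ResClass (Z : Set D) : ℕ → Set D
  | 0 => {C | ∃ Z₀ ∈ Z, Nonempty (Z₀ ≅ C)}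
  | (m + 1) => {C | ∃ (K X : D) (f : K ⟶ X) (g : X ⟶ C) (w : f ≫ g = 0),
      (ShortComplex.mk f g w).ShortExact ∧ X ∈ Z ∧ K ∈ ResClass Z m}

/-- `Z^∨_m` : objects with a `Z`-coresolution of length `m`. -/
def CoresClass (Z : Set D) : ℕ → Set D
  | 0 => {C | ∃ Z₀ ∈ Z, Nonempty (C ≅ Z₀)}
  | (m + 1) => {C | ∃ (X K : D) (f : C ⟶ X) (g : X ⟶ K) (w : f ≫ g = 0),
      (ShortComplex.mk f g w).ShortExact ∧ X ∈ Z ∧ K ∈ CoresClass Z m}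

/-- Left `n`-cotorsion pair. -/
structure IsLeftNCotorsionPair (n : ℕ) (𝒳 𝒴 : Set D) : Prop where
  closed_summands : ∀ ⦃X X' : D⦄, X ∈ 𝒳 →
    (∃ (s : X' ⟶ X) (r : X ⟶ X'), s ≫ r = 𝟙 X') → X' ∈ 𝒳
  ext_vanish : ∀ ⦃X Y : D⦄, X ∈ 𝒳 → Y ∈ 𝒴 → ∀ k, 1 ≤ k → k ≤ n → ExtVanish X Y k
  exists_ses : ∀ C : D, ∃ (K X : D) (f : K ⟶ X) (g : X ⟶ C) (w : f ≫ g = 0),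
    (ShortComplex.mk f g w).ShortExact ∧ X ∈ 𝒳 ∧ K ∈ ResClass 𝒴 (n - 1)

/-- Right `n`-cotorsion pair. -/
structure IsRightNCotorsionPair (n : ℕ) (𝒳 𝒴 : Set D) : Prop where
  closed_summands : ∀ ⦃Y Y' : D⦄, Y ∈ 𝒴 →
    (∃ (s : Y' ⟶ Y) (r : Y ⟶ Y'), s ≫ r = 𝟙 Y') → Y' ∈ 𝒴
  ext_vanish : ∀ ⦃X Y : D⦄, X ∈ 𝒳 → Y ∈ 𝒴 → ∀ k, 1 ≤ k → k ≤ n → ExtVanish X Y k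
  exists_ses : ∀ C : D, ∃ (Y Z : D) (f : C ⟶ Y) (g : Y ⟶ Z) (w : f ≫ g = 0),
    (ShortComplex.mk f g w).ShortExact ∧ Y ∈ 𝒴 ∧ Z ∈ CoresClass 𝒳 (n - 1)

/-- `n`-cotorsion pair. -/
def IsNCotorsionPair (n : ℕ) (𝒳 𝒴 : Set D) : Prop :=
  IsLeftNCotorsionPair n 𝒳 𝒴 ∧ IsRightNCotorsionPair n 𝒳 𝒴

/-- Hereditary `n`-cotorsion pair. -/
def IsHereditaryNCotorsionPair (n : ℕ) (𝒳 𝒴 : Set D) : Prop :=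
  IsNCotorsionPair n 𝒳 𝒴 ∧ ∀ ⦃X Y : D⦄, X ∈ 𝒳 → Y ∈ 𝒴 → ExtVanish X Y (n + 1)

/-- The image class of a class of objects under a functor: objects isomorphic to
`F.obj X` for some `X ∈ S`. -/
def imgClass {A B : Type u} [Category.{v} A] [Category.{v} B] (F : A ⥤ B) (S : Set A) :
    Set B :=
  {Y | ∃ X ∈ S, Nonempty (F.obj X ≅ Y)}

/-- A pseudo cluster tilting subcategory of an abelian category, given as a class of
objects: a full additive iso-closed subcategory admitting the two approximation
short exact sequences. -/
structure IsPseudoClusterTilting (T : Set D) : Prop where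
  iso_closed : ∀ ⦃X Y : D⦄, X ∈ T → Nonempty (X ≅ Y) → Y ∈ T
  zero_mem : (0 : D) ∈ T
  biprod_mem : ∀ ⦃X Y : D⦄, X ∈ T → Y ∈ T → (X ⊞ Y) ∈ T
  left_approx : ∀ C : D, ∃ (T₁ T₂ : D) (f : C ⟶ T₁) (g : T₁ ⟶ T₂) (w : f ≫ g = 0),
    (ShortComplex.mk f g w).ShortExact ∧ T₁ ∈ T ∧ T₂ ∈ T ∧
      ∀ T' ∈ T, ∀ h : C ⟶ T', ∃ k : T₁ ⟶ T', f ≫ k = h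
  right_approx : ∀ C : D, ∃ (T₃ T₄ : D) (f : T₃ ⟶ T₄) (g : T₄ ⟶ C) (w : f ≫ g = 0),
    (ShortComplex.mk f g w).ShortExact ∧ T₃ ∈ T ∧ T₄ ∈ T ∧
      ∀ T' ∈ T, ∀ h : T' ⟶ C, ∃ k : T' ⟶ T₄, k ≫ g = h

/-!
For `(F, G) = (i^*, j^*)` (coresolutions) or `(i^!, j^*)` (resolutions) both functors are exact and
together they detect zero objects, so a morphism of `B` is mono (epi) once its images are, and its
cokernel (kernel) is then computed componentwise. Hence steps `0 → i^*X → S → Q₁ → 0` in `A` and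
`0 → j^*X → U → Q₂ → 0` in `C` glue to a step `0 → X → V → Y → 0` in `B` as soon as one morphism
`X ⟶ V` realizes both given monomorphisms up to isomorphism. Take `V = j_*U ⊞ i_*S` with the adjunct
components: `j^*` kills `i_*S`, and `i^*` kills `j_*U` since a morphism from an object killed by the
exact `i^!` to one killed by `j^*` factors through a zero image. Dually `W = j_!U ⊞ i_*S` works for
resolutions, using exactness of `i^*`. Induction on the length concludes.
-/

section ExactFunctors

variable {A B : Type u} [Category.{v} A] [Category.{v} B] [Abelian A] [Abelian B] {F : A ⥤ B}

lemma IsExactFunctor.preservesFiniteLimits_and_preservesFiniteColimits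
    (hF : IsExactFunctor F) : PreservesFiniteLimits F ∧ PreservesFiniteColimits F :=
  haveI := hF.additive
  (F.exact_tfae.out 0 3).1 fun (S : ShortComplex A) hS =>
    hF.preserves_shortExact S.f S.g S.zero _ hS

lemma nonempty_iso_obj_cokernel [PreservesFiniteColimits F] [F.PreservesZeroMorphisms]
    {X Y : A} (g : X ⟶ Y) {S Q : B} {f : F.obj X ⟶ S} {q : S ⟶ Q} {w : f ≫ q = 0}
    (hS : (ShortComplex.mk f q w).ShortExact) (α : F.obj Y ≅ S) (hα : F.map g ≫ α.hom = f) :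
    Nonempty (F.obj (cokernel g) ≅ Q) :=
  ⟨PreservesCokernel.iso F g ≪≫ (cokernelCompIsIso (F.map g) α.hom).symm ≪≫
    cokernelIsoOfEq hα ≪≫ (hS.gIsCokernel.coconePointUniqueUpToIso (cokernelIsCokernel f)).symm⟩

lemma nonempty_iso_obj_kernel [PreservesFiniteLimits F] [F.PreservesZeroMorphisms]
    {X Y : A} (h : X ⟶ Y) {K S : B} {k : K ⟶ S} {f : S ⟶ F.obj Y} {w : k ≫ f = 0}
    (hS : (ShortComplex.mk k f w).ShortExact) (α : S ≅ F.obj X) (hα : α.hom ≫ F.map h = f) :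
    Nonempty (F.obj (kernel h) ≅ K) :=
  ⟨PreservesKernel.iso F h ≪≫ (kernelIsIsoComp α.hom (F.map h)).symm ≪≫
    kernelIsoOfEq hα ≪≫ (hS.fIsKernel.conePointUniqueUpToIso (kernelIsKernel f)).symm⟩

end ExactFunctors

section Classes

lemma mem_coresClass_of_iso {Z : Set D} {m : ℕ} {P P' : D} (hP : P ∈ CoresClass Z m)
    (e : P ≅ P') : P' ∈ CoresClass Z m := by
  cases m with
  | zero =>
    obtain ⟨Z₀, hZ₀, ⟨e₀⟩⟩ := hP
    exact ⟨Z₀, hZ₀, ⟨e.symm ≪≫ e₀⟩⟩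
  | succ m =>
    obtain ⟨X, K, f, g, w, hS, hX, hK⟩ := hP
    refine ⟨X, K, e.inv ≫ f, g, by simp [w], ?_, hX, hK⟩
    exact ShortComplex.shortExact_of_iso (S₁ := .mk f g w)
      (ShortComplex.isoMk e (Iso.refl _) (Iso.refl _) (by simp) (by simp)) hS

lemma mem_resClass_of_iso {Z : Set D} {m : ℕ} {P P' : D} (hP : P ∈ ResClass Z m)
    (e : P ≅ P') : P' ∈ ResClass Z m := by
  cases m with
  | zero =>
    obtain ⟨Z₀, hZ₀, ⟨e₀⟩⟩ := hP
    exact ⟨Z₀, hZ₀, ⟨e₀ ≪≫ e⟩⟩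
  | succ m =>
    obtain ⟨K, X, f, g, w, hS, hX, hK⟩ := hP
    refine ⟨K, X, f, g ≫ e.hom, by simp [reassoc_of% w], ?_, hX, hK⟩
    exact ShortComplex.shortExact_of_iso (S₁ := .mk f g w)
      (ShortComplex.isoMk (Iso.refl _) (Iso.refl _) e (by simp) (by simp)) hS

variable {A : Type u} [Category.{v} A] [Abelian A] (F : D ⥤ A) [F.PreservesZeroMorphisms]
  [PreservesFiniteLimits F] [PreservesFiniteColimits F] {Z : Set D} {T : Set A}

lemma map_mem_coresClass (hZT : ∀ Y ∈ Z, F.obj Y ∈ T) {m : ℕ} {X : D}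
    (hX : X ∈ CoresClass Z m) : F.obj X ∈ CoresClass T m := by
  induction m generalizing X with
  | zero =>
    obtain ⟨Z₀, hZ₀, ⟨e⟩⟩ := hX
    exact ⟨F.obj Z₀, hZT Z₀ hZ₀, ⟨F.mapIso e⟩⟩
  | succ m ih =>
    obtain ⟨Y, K, f, g, w, hS, hY, hK⟩ := hX
    exact ⟨F.obj Y, F.obj K, F.map f, F.map g, _, hS.map_of_exact F, hZT Y hY, ih hK⟩

lemma map_mem_resClass (hZT : ∀ Y ∈ Z, F.obj Y ∈ T) {m : ℕ} {X : D}
    (hX : X ∈ ResClass Z m) : F.obj X ∈ ResClass T m := by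
  induction m generalizing X with
  | zero =>
    obtain ⟨Z₀, hZ₀, ⟨e⟩⟩ := hX
    exact ⟨F.obj Z₀, hZT Z₀ hZ₀, ⟨F.mapIso e⟩⟩
  | succ m ih =>
    obtain ⟨K, Y, f, g, w, hS, hY, hK⟩ := hX
    exact ⟨F.obj K, F.obj Y, F.map f, F.map g, _, hS.map_of_exact F, hZT Y hY, ih hK⟩

end Classes

section JointlyReflect

variable {A B C : Type u} [Category.{v} A] [Category.{v} B] [Category.{v} C]
  (F : B ⥤ A) (G : B ⥤ C)

def JointlyReflectIsZero : Prop :=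
  ∀ M : B, IsZero (F.obj M) → IsZero (G.obj M) → IsZero M

def JointlyRealizeMapsFrom : Prop :=
  ∀ (X : B) {S : A} {U : C} (a : F.obj X ⟶ S) (b : G.obj X ⟶ U),
    ∃ (V : B) (g : X ⟶ V) (α : F.obj V ≅ S) (β : G.obj V ≅ U),
      F.map g ≫ α.hom = a ∧ G.map g ≫ β.hom = b

def JointlyRealizeMapsTo : Prop :=
  ∀ (X : B) {S : A} {U : C} (a : S ⟶ F.obj X) (b : U ⟶ G.obj X),
    ∃ (W : B) (h : W ⟶ X) (α : S ≅ F.obj W) (β : U ≅ G.obj W),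
      α.hom ≫ F.map h = a ∧ β.hom ≫ G.map h = b

variable {F G}

lemma JointlyReflectIsZero.symm (h : JointlyReflectIsZero F G) : JointlyReflectIsZero G F :=
  fun M hG hF => h M hF hG

variable [Abelian A] [Abelian B] [Abelian C]

lemma JointlyReflectIsZero.eq_zero [F.PreservesEpimorphisms] [G.PreservesMonomorphisms]
    (h : JointlyReflectIsZero F G) {Y Z : B} (f : Y ⟶ Z) (hY : IsZero (F.obj Y))
    (hZ : IsZero (G.obj Z)) : f = 0 := by
  have hI : IsZero (image f) :=
    h _ (hY.of_epi (F.map (factorThruImage f))) (hZ.of_mono (G.map (image.ι f)))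
  rw [← Limits.image.fac f, hI.eq_of_src (image.ι f) 0, comp_zero]

lemma JointlyReflectIsZero.mono [PreservesFiniteLimits F] [PreservesFiniteLimits G]
    (h : JointlyReflectIsZero F G) {X Y : B} (g : X ⟶ Y) [Mono (F.map g)] [Mono (G.map g)] :
    Mono g :=
  Preadditive.mono_of_isZero_kernel g <| h _
    ((PreservesKernel.iso F g).isZero_iff.2 (isZero_kernel_of_mono _))
    ((PreservesKernel.iso G g).isZero_iff.2 (isZero_kernel_of_mono _))

lemma JointlyReflectIsZero.epi [PreservesFiniteColimits F] [PreservesFiniteColimits G]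
    (h : JointlyReflectIsZero F G) {X Y : B} (g : X ⟶ Y) [Epi (F.map g)] [Epi (G.map g)] :
    Epi g :=
  Preadditive.epi_of_isZero_cokernel g <| h _
    ((PreservesCokernel.iso F g).isZero_iff.2 (isZero_cokernel_of_epi _))
    ((PreservesCokernel.iso G g).isZero_iff.2 (isZero_cokernel_of_epi _))

variable
  [F.PreservesZeroMorphisms] [PreservesFiniteLimits F] [PreservesFiniteColimits F]
  [G.PreservesZeroMorphisms] [PreservesFiniteLimits G] [PreservesFiniteColimits G]

lemma JointlyReflectIsZero.exists_shortExact_from (hz : JointlyReflectIsZero F G)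
    (hr : JointlyRealizeMapsFrom F G) {X : B}
    {S Q₁ : A} {f₁ : F.obj X ⟶ S} {q₁ : S ⟶ Q₁} {w₁ : f₁ ≫ q₁ = 0}
    (h₁ : (ShortComplex.mk f₁ q₁ w₁).ShortExact)
    {U Q₂ : C} {f₂ : G.obj X ⟶ U} {q₂ : U ⟶ Q₂} {w₂ : f₂ ≫ q₂ = 0}
    (h₂ : (ShortComplex.mk f₂ q₂ w₂).ShortExact) :
    ∃ (V Y : B) (g : X ⟶ V) (p : V ⟶ Y) (w : g ≫ p = 0), (ShortComplex.mk g p w).ShortExact ∧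
      Nonempty (F.obj V ≅ S) ∧ Nonempty (G.obj V ≅ U) ∧
      Nonempty (F.obj Y ≅ Q₁) ∧ Nonempty (G.obj Y ≅ Q₂) := by
  obtain ⟨V, g, α, β, hα, hβ⟩ := hr X f₁ f₂
  have : Mono (F.map g) := (mono_comp_iff_of_mono _ α.hom).1 (hα ▸ h₁.mono_f)
  have : Mono (G.map g) := (mono_comp_iff_of_mono _ β.hom).1 (hβ ▸ h₂.mono_f)
  have := hz.mono g
  exact ⟨V, cokernel g, g, cokernel.π g, cokernel.condition g,
    { exact := ShortComplex.exact_cokernel g }, ⟨α⟩, ⟨β⟩,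
    nonempty_iso_obj_cokernel g h₁ α hα, nonempty_iso_obj_cokernel g h₂ β hβ⟩

lemma JointlyReflectIsZero.exists_shortExact_to (hz : JointlyReflectIsZero F G)
    (hr : JointlyRealizeMapsTo F G) {X : B}
    {K₁ S : A} {k₁ : K₁ ⟶ S} {f₁ : S ⟶ F.obj X} {w₁ : k₁ ≫ f₁ = 0}
    (h₁ : (ShortComplex.mk k₁ f₁ w₁).ShortExact)
    {K₂ U : C} {k₂ : K₂ ⟶ U} {f₂ : U ⟶ G.obj X} {w₂ : k₂ ≫ f₂ = 0}
    (h₂ : (ShortComplex.mk k₂ f₂ w₂).ShortExact) :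
    ∃ (Y W : B) (i : Y ⟶ W) (h : W ⟶ X) (w : i ≫ h = 0), (ShortComplex.mk i h w).ShortExact ∧
      Nonempty (F.obj W ≅ S) ∧ Nonempty (G.obj W ≅ U) ∧
      Nonempty (F.obj Y ≅ K₁) ∧ Nonempty (G.obj Y ≅ K₂) := by
  obtain ⟨W, h, α, β, hα, hβ⟩ := hr X f₁ f₂
  have : Epi (F.map h) := (epi_comp_iff_of_epi α.hom _).1 (hα ▸ h₁.epi_g)
  have : Epi (G.map h) := (epi_comp_iff_of_epi β.hom _).1 (hβ ▸ h₂.epi_g)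
  have := hz.epi h
  exact ⟨kernel h, W, kernel.ι h, h, kernel.condition h,
    { exact := ShortComplex.exact_kernel h }, ⟨α.symm⟩, ⟨β.symm⟩,
    nonempty_iso_obj_kernel h h₁ α hα, nonempty_iso_obj_kernel h h₂ β hβ⟩

variable {T₁ : Set A} {T₂ : Set C}

lemma JointlyReflectIsZero.mem_coresClass (hz : JointlyReflectIsZero F G)
    (hr : JointlyRealizeMapsFrom F G) (hT₁ : ∀ ⦃P P' : A⦄, P ∈ T₁ → (P ≅ P') → P' ∈ T₁)
    (hT₂ : ∀ ⦃P P' : C⦄, P ∈ T₂ → (P ≅ P') → P' ∈ T₂) {m : ℕ} {X : B}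
    (h₁ : F.obj X ∈ CoresClass T₁ m) (h₂ : G.obj X ∈ CoresClass T₂ m) :
    X ∈ CoresClass {X | F.obj X ∈ T₁ ∧ G.obj X ∈ T₂} m := by
  induction m generalizing X with
  | zero =>
    obtain ⟨Z₁, hZ₁, ⟨e₁⟩⟩ := h₁
    obtain ⟨Z₂, hZ₂, ⟨e₂⟩⟩ := h₂
    exact ⟨X, ⟨hT₁ hZ₁ e₁.symm, hT₂ hZ₂ e₂.symm⟩, ⟨Iso.refl X⟩⟩
  | succ m ih =>
    obtain ⟨S, Q₁, f₁, q₁, w₁, hS₁, hS, hQ₁⟩ := h₁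
    obtain ⟨U, Q₂, f₂, q₂, w₂, hS₂, hU, hQ₂⟩ := h₂
    obtain ⟨V, Y, g, p, w, hgp, ⟨eS⟩, ⟨eU⟩, ⟨eQ₁⟩, ⟨eQ₂⟩⟩ :=
      hz.exists_shortExact_from hr hS₁ hS₂
    exact ⟨V, Y, g, p, w, hgp, ⟨hT₁ hS eS.symm, hT₂ hU eU.symm⟩,
      ih (mem_coresClass_of_iso hQ₁ eQ₁.symm) (mem_coresClass_of_iso hQ₂ eQ₂.symm)⟩

lemma JointlyReflectIsZero.mem_resClass (hz : JointlyReflectIsZero F G)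
    (hr : JointlyRealizeMapsTo F G) (hT₁ : ∀ ⦃P P' : A⦄, P ∈ T₁ → (P ≅ P') → P' ∈ T₁)
    (hT₂ : ∀ ⦃P P' : C⦄, P ∈ T₂ → (P ≅ P') → P' ∈ T₂) {m : ℕ} {X : B}
    (h₁ : F.obj X ∈ ResClass T₁ m) (h₂ : G.obj X ∈ ResClass T₂ m) :
    X ∈ ResClass {X | F.obj X ∈ T₁ ∧ G.obj X ∈ T₂} m := by
  induction m generalizing X with
  | zero =>
    obtain ⟨Z₁, hZ₁, ⟨e₁⟩⟩ := h₁
    obtain ⟨Z₂, hZ₂, ⟨e₂⟩⟩ := h₂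
    exact ⟨X, ⟨hT₁ hZ₁ e₁, hT₂ hZ₂ e₂⟩, ⟨Iso.refl X⟩⟩
  | succ m ih =>
    obtain ⟨K₁, S, k₁, f₁, w₁, hS₁, hS, hK₁⟩ := h₁
    obtain ⟨K₂, U, k₂, f₂, w₂, hS₂, hU, hK₂⟩ := h₂
    obtain ⟨Y, W, i, h, w, hih, ⟨eS⟩, ⟨eU⟩, ⟨eK₁⟩, ⟨eK₂⟩⟩ :=
      hz.exists_shortExact_to hr hS₁ hS₂
    exact ⟨Y, W, i, h, w, hih, ⟨hT₁ hS eS.symm, hT₂ hU eU.symm⟩,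
      ih (mem_resClass_of_iso hK₁ eK₁.symm) (mem_resClass_of_iso hK₂ eK₂.symm)⟩

lemma JointlyReflectIsZero.coresClass_eq (hz : JointlyReflectIsZero F G)
    (hr : JointlyRealizeMapsFrom F G) (hT₁ : ∀ ⦃P P' : A⦄, P ∈ T₁ → (P ≅ P') → P' ∈ T₁)
    (hT₂ : ∀ ⦃P P' : C⦄, P ∈ T₂ → (P ≅ P') → P' ∈ T₂) (m : ℕ) :
    CoresClass {X | F.obj X ∈ T₁ ∧ G.obj X ∈ T₂} m =
      {X | F.obj X ∈ CoresClass T₁ m ∧ G.obj X ∈ CoresClass T₂ m} :=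
  Set.ext fun _ =>
    ⟨fun hX => ⟨map_mem_coresClass F (fun _ hY => hY.1) hX,
      map_mem_coresClass G (fun _ hY => hY.2) hX⟩,
    fun hX => hz.mem_coresClass hr hT₁ hT₂ hX.1 hX.2⟩

lemma JointlyReflectIsZero.resClass_eq (hz : JointlyReflectIsZero F G)
    (hr : JointlyRealizeMapsTo F G) (hT₁ : ∀ ⦃P P' : A⦄, P ∈ T₁ → (P ≅ P') → P' ∈ T₁)
    (hT₂ : ∀ ⦃P P' : C⦄, P ∈ T₂ → (P ≅ P') → P' ∈ T₂) (m : ℕ) :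
    ResClass {X | F.obj X ∈ T₁ ∧ G.obj X ∈ T₂} m =
      {X | F.obj X ∈ ResClass T₁ m ∧ G.obj X ∈ ResClass T₂ m} :=
  Set.ext fun _ =>
    ⟨fun hX => ⟨map_mem_resClass F (fun _ hY => hY.1) hX,
      map_mem_resClass G (fun _ hY => hY.2) hX⟩,
    fun hX => hz.mem_resClass hr hT₁ hT₂ hX.1 hX.2⟩

end JointlyReflect

namespace Recollement

variable {A B C : Type u} [Category.{v} A] [Category.{v} B] [Category.{v} C]
  [Abelian A] [Abelian B] [Abelian C] (R : Recollement A B C)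

instance : R.iStar.Full := R.iStar_full
instance : R.iStar.Faithful := R.iStar_faithful
instance : R.jShriek.Full := R.jShriek_full
instance : R.jShriek.Faithful := R.jShriek_faithful
instance : R.jStar.Full := R.jStar_full
instance : R.jStar.Faithful := R.jStar_faithful
instance : R.iUStar.Additive := R.iUStar_additive
instance : R.iShriek.Additive := R.iShriek_additive
instance : R.jUStar.Additive := R.jUStar_exact.additive
instance : PreservesFiniteLimits R.jUStar :=
  R.jUStar_exact.preservesFiniteLimits_and_preservesFiniteColimits.1
instance : PreservesFiniteColimits R.jUStar :=
  R.jUStar_exact.preservesFiniteLimits_and_preservesFiniteColimits.2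

lemma isZero_jUStar_obj_iStar (X : A) : IsZero (R.jUStar.obj (R.iStar.obj X)) := by
  obtain ⟨e⟩ := (R.essIm_iStar_eq_ker_jUStar (R.iStar.obj X)).1 ⟨X, ⟨Iso.refl _⟩⟩
  exact (isZero_zero C).of_iso e

lemma jointlyReflectIsZero_iUStar_jUStar : JointlyReflectIsZero R.iUStar R.jUStar := by
  intro M hi hj
  obtain ⟨X, ⟨e⟩⟩ := (R.essIm_iStar_eq_ker_jUStar M).2 ⟨hj.isoZero⟩
  have hX : IsZero X := (hi.of_iso (R.iUStar.mapIso e)).of_iso (asIso (R.adj₁.counit.app X)).symm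
  exact (R.iStar.map_isZero hX).of_iso e.symm

lemma jointlyReflectIsZero_iShriek_jUStar : JointlyReflectIsZero R.iShriek R.jUStar := by
  intro M hi hj
  obtain ⟨X, ⟨e⟩⟩ := (R.essIm_iStar_eq_ker_jUStar M).2 ⟨hj.isoZero⟩
  have hX : IsZero X := (hi.of_iso (R.iShriek.mapIso e)).of_iso (asIso (R.adj₂.unit.app X))
  exact (R.iStar.map_isZero hX).of_iso e.symm

lemma isZero_iShriek_obj_jStar (U : C) : IsZero (R.iShriek.obj (R.jStar.obj U)) := by
  rw [IsZero.iff_id_eq_zero]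
  apply (R.adj₂.homEquiv _ _).symm.injective
  apply (R.adj₄.homEquiv _ _).symm.injective
  exact (R.isZero_jUStar_obj_iStar _).eq_of_src _ _

lemma isZero_iUStar_obj_jShriek (U : C) : IsZero (R.iUStar.obj (R.jShriek.obj U)) := by
  rw [IsZero.iff_id_eq_zero]
  apply (R.adj₁.homEquiv _ _).injective
  apply (R.adj₃.homEquiv _ _).injective
  exact (R.isZero_jUStar_obj_iStar _).eq_of_tgt _ _

lemma isZero_iUStar_obj_jStar [R.iShriek.PreservesEpimorphisms] (U : C) :
    IsZero (R.iUStar.obj (R.jStar.obj U)) := by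
  rw [IsZero.iff_id_eq_zero]
  apply (R.adj₁.homEquiv _ _).injective
  rw [show (R.adj₁.homEquiv _ _) 0 = 0 by simp [Adjunction.homEquiv_unit]]
  exact R.jointlyReflectIsZero_iShriek_jUStar.eq_zero _ (R.isZero_iShriek_obj_jStar U)
    (R.isZero_jUStar_obj_iStar _)

lemma isZero_iShriek_obj_jShriek [R.iUStar.PreservesMonomorphisms] (U : C) :
    IsZero (R.iShriek.obj (R.jShriek.obj U)) := by
  rw [IsZero.iff_id_eq_zero]
  apply (R.adj₂.homEquiv _ _).symm.injective
  rw [show (R.adj₂.homEquiv _ _).symm 0 = 0 by simp [Adjunction.homEquiv_counit]]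
  exact R.jointlyReflectIsZero_iUStar_jUStar.symm.eq_zero _ (R.isZero_jUStar_obj_iStar _)
    (R.isZero_iUStar_obj_jShriek U)

lemma jointlyRealizeMapsFrom_iUStar_jUStar [R.iShriek.PreservesEpimorphisms] :
    JointlyRealizeMapsFrom R.iUStar R.jUStar := by
  have := preservesBinaryBiproducts_of_preservesBiproducts R.iUStar
  have := preservesBinaryBiproducts_of_preservesBiproducts R.jUStar
  intro X S U a b
  refine ⟨R.jStar.obj U ⊞ R.iStar.obj S,
    biprod.lift (R.adj₄.homEquiv _ _ b) (R.adj₁.homEquiv _ _ a),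
    R.iUStar.mapBiprod _ _ ≪≫ (isoZeroBiprod (R.isZero_iUStar_obj_jStar U)).symm ≪≫
      asIso (R.adj₁.counit.app S),
    R.jUStar.mapBiprod _ _ ≪≫ (isoBiprodZero (R.isZero_jUStar_obj_iStar S)).symm ≪≫
      asIso (R.adj₄.counit.app U), ?_, ?_⟩
  · simp only [Iso.trans_hom, Functor.mapBiprod_hom, Iso.symm_hom, isoZeroBiprod_inv, asIso_hom]
    rw [biprod.lift_snd_assoc, ← Functor.map_comp_assoc, biprod.lift_snd]
    simp [Adjunction.homEquiv_unit]
  · simp only [Iso.trans_hom, Functor.mapBiprod_hom, Iso.symm_hom, isoBiprodZero_inv, asIso_hom]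
    rw [biprod.lift_fst_assoc, ← Functor.map_comp_assoc, biprod.lift_fst]
    simp [Adjunction.homEquiv_unit]

lemma jointlyRealizeMapsTo_iShriek_jUStar [R.iUStar.PreservesMonomorphisms] :
    JointlyRealizeMapsTo R.iShriek R.jUStar := by
  have := preservesBinaryBiproducts_of_preservesBiproducts R.iShriek
  have := preservesBinaryBiproducts_of_preservesBiproducts R.jUStar
  intro X S U a b
  refine ⟨R.jShriek.obj U ⊞ R.iStar.obj S,
    biprod.desc ((R.adj₃.homEquiv _ _).symm b) ((R.adj₂.homEquiv _ _).symm a),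
    asIso (R.adj₂.unit.app S) ≪≫ isoZeroBiprod (R.isZero_iShriek_obj_jShriek U) ≪≫
      (R.iShriek.mapBiprod _ _).symm,
    asIso (R.adj₃.unit.app U) ≪≫ isoBiprodZero (R.isZero_jUStar_obj_iStar S) ≪≫
      (R.jUStar.mapBiprod _ _).symm, ?_, ?_⟩
  · simp only [Iso.trans_hom, Functor.mapBiprod_inv, Iso.symm_hom, isoZeroBiprod_hom, asIso_hom,
      Category.assoc]
    rw [biprod.inr_desc_assoc, ← Functor.map_comp, biprod.inr_desc]
    simp [Adjunction.homEquiv_counit]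
  · simp only [Iso.trans_hom, Functor.mapBiprod_inv, Iso.symm_hom, isoBiprodZero_hom, asIso_hom,
      Category.assoc]
    rw [biprod.inl_desc_assoc, ← Functor.map_comp, biprod.inl_desc]
    simp [Adjunction.homEquiv_counit]

end Recollement

lemma IsLeftNCotorsionPair.mem_of_iso {n : ℕ} {𝒳 𝒴 : Set D} (h : IsLeftNCotorsionPair n 𝒳 𝒴)
    ⦃X X' : D⦄ (hX : X ∈ 𝒳) (e : X ≅ X') : X' ∈ 𝒳 :=
  h.closed_summands hX ⟨e.inv, e.hom, e.inv_hom_id⟩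

lemma IsRightNCotorsionPair.mem_of_iso {n : ℕ} {𝒳 𝒴 : Set D} (h : IsRightNCotorsionPair n 𝒳 𝒴)
    ⦃Y Y' : D⦄ (hY : Y ∈ 𝒴) (e : Y ≅ Y') : Y' ∈ 𝒴 :=
  h.closed_summands hY ⟨e.inv, e.hom, e.inv_hom_id⟩

variable {A B C : Type u} [Category.{v} A] [Category.{v} B] [Category.{v} C]
  [Abelian A] [Abelian B] [Abelian C]

theorem glued_nCotorsionPair_resClasses_general
    (R : Recollement A B C)
    (hiU : IsExactFunctor R.iUStar) (hiS : IsExactFunctor R.iShriek)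
    (n : ℕ) (T₁ F₁ : Set A) (T₂ F₂ : Set C)
    (h₁ : IsNCotorsionPair n T₁ F₁) (h₂ : IsNCotorsionPair n T₂ F₂) :
    CoresClass {X : B | R.iUStar.obj X ∈ T₁ ∧ R.jUStar.obj X ∈ T₂} (n - 1) =
      {X : B | R.iUStar.obj X ∈ CoresClass T₁ (n - 1) ∧
        R.jUStar.obj X ∈ CoresClass T₂ (n - 1)} ∧
    ResClass {X : B | R.iShriek.obj X ∈ F₁ ∧ R.jUStar.obj X ∈ F₂} (n - 1) =
      {X : B | R.iShriek.obj X ∈ ResClass F₁ (n - 1) ∧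
        R.jUStar.obj X ∈ ResClass F₂ (n - 1)} := by
  obtain ⟨_, _⟩ := hiU.preservesFiniteLimits_and_preservesFiniteColimits
  obtain ⟨_, _⟩ := hiS.preservesFiniteLimits_and_preservesFiniteColimits
  exact ⟨R.jointlyReflectIsZero_iUStar_jUStar.coresClass_eq
      R.jointlyRealizeMapsFrom_iUStar_jUStar h₁.1.mem_of_iso h₂.1.mem_of_iso (n - 1),
    R.jointlyReflectIsZero_iShriek_jUStar.resClass_eq
      R.jointlyRealizeMapsTo_iShriek_jUStar h₁.2.mem_of_iso h₂.2.mem_of_iso (n - 1)⟩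

/-- (co)resolution classes of the glued pair are detected componentwise. -/
theorem glued_nCotorsionPair_resClasses
    [EnoughProjectives A] [EnoughInjectives A] [EnoughProjectives B] [EnoughInjectives B]
    [EnoughProjectives C] [EnoughInjectives C]
    (R : Recollement A B C)
    (hiU : IsExactFunctor R.iUStar) (hiS : IsExactFunctor R.iShriek)
    (n : ℕ) (hn : 1 ≤ n) (T₁ F₁ : Set A) (T₂ F₂ : Set C)
    (h₁ : IsNCotorsionPair n T₁ F₁) (h₂ : IsNCotorsionPair n T₂ F₂) :
    CoresClass {X : B | R.iUStar.obj X ∈ T₁ ∧ R.jUStar.obj X ∈ T₂} (n - 1) =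
      {X : B | R.iUStar.obj X ∈ CoresClass T₁ (n - 1) ∧
        R.jUStar.obj X ∈ CoresClass T₂ (n - 1)} ∧
    ResClass {X : B | R.iShriek.obj X ∈ F₁ ∧ R.jUStar.obj X ∈ F₂} (n - 1) =
      {X : B | R.iShriek.obj X ∈ ResClass F₁ (n - 1) ∧
        R.jUStar.obj X ∈ ResClass F₂ (n - 1)} :=
  glued_nCotorsionPair_resClasses_general R hiU hiS n T₁ F₁ T₂ F₂ h₁ h₂

end PaperRecollement
end

section
/- Let (A, B, C) be a recollement of abelian categories. If A has enough projectives and i^! is exact, then for every object X of A, every object Y of B, and every integer k ≥ 1 there is an isomorphism of abelian groups Ext^k_B(i_*(X), Y) ≅ Ext^k_A(X, i^!(Y)). -/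
open CategoryTheory CategoryTheory.Limits CategoryTheory.Abelian ZeroObject

universe v u

namespace PaperRecollement

variable {D : Type u} [Category.{v} D] [Abelian D]

variable {A B C : Type u} [Category.{v} A] [Category.{v} B] [Category.{v} C]
  [Abelian A] [Abelian B] [Abelian C]


section AuxExt

variable {A' B' : Type u} [Category.{v} A'] [Category.{v} B'] [Abelian A'] [Abelian B']

lemma IsExactFunctor.map_shortExact {F : A' ⥤ B'} [F.Additive] (hF : IsExactFunctor F)
    {S : ShortComplex A'} (hS : S.ShortExact) : (S.map F).ShortExact := by
  have w' : F.map S.f ≫ F.map S.g = 0 := by rw [← F.map_comp, S.zero, F.map_zero]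
  exact hF.preserves_shortExact S.f S.g S.zero w' hS

lemma IsExactFunctor.preservesFiniteLimits' {F : A' ⥤ B'} (hF : IsExactFunctor F) :
    PreservesFiniteLimits F := by
  have := hF.additive
  have h := (Functor.exact_tfae F).out 0 3
  exact (h.1 (fun S hS => hF.map_shortExact hS)).1

lemma IsExactFunctor.preservesFiniteColimits' {F : A' ⥤ B'} (hF : IsExactFunctor F) :
    PreservesFiniteColimits F := by
  have := hF.additive
  have h := (Functor.exact_tfae F).out 0 3
  exact (h.1 (fun S hS => hF.map_shortExact hS)).2

/-- An adjunction between additive functors induces an adjunction between the functors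
on cochain complexes. -/
noncomputable def mapCochainComplexAdjunction {F : A' ⥤ B'} {G : B' ⥤ A'} (adj : F ⊣ G)
    [F.Additive] [G.Additive] :
    F.mapHomologicalComplex (ComplexShape.up ℤ) ⊣ G.mapHomologicalComplex (ComplexShape.up ℤ) :=
  Adjunction.mkOfHomEquiv
    { homEquiv := fun K L =>
        { toFun := fun φ =>
            { f := fun i => adj.homEquiv _ _ (φ.f i)
              comm' := fun i j _ => by
                exact (adj.homEquiv_naturality_right _ _).symm.trans
                  ((congrArg (adj.homEquiv _ _) (φ.comm i j)).trans (adj.homEquiv_naturality_left _ _)) }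
          invFun := fun ψ =>
            { f := fun i => (adj.homEquiv _ _).symm (ψ.f i)
              comm' := fun i j _ => by
                exact (adj.homEquiv_naturality_right_symm _ _).symm.trans
                  ((congrArg (adj.homEquiv _ _).symm (ψ.comm i j)).trans (adj.homEquiv_naturality_left_symm _ _)) }
          left_inv := fun φ => by ext i; exact (adj.homEquiv _ _).symm_apply_apply _
          right_inv := fun ψ => by ext i; exact (adj.homEquiv _ _).apply_symm_apply _ }
      homEquiv_naturality_left_symm := fun f g => by
        ext i
        exact Adjunction.homEquiv_naturality_left_symm adj _ _
      homEquiv_naturality_right := fun f g => by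
        ext i
        exact Adjunction.homEquiv_naturality_right adj _ _ }

/-- An adjunction between exact functors induces an adjunction between the induced
functors on derived categories. -/
noncomputable def mapDerivedCategoryAdjunction
    [HasDerivedCategory.{max u v} A'] [HasDerivedCategory.{max u v} B']
    {F : A' ⥤ B'} {G : B' ⥤ A'} (adj : F ⊣ G) [F.Additive] [G.Additive]
    [PreservesFiniteLimits F] [PreservesFiniteColimits F]
    [PreservesFiniteLimits G] [PreservesFiniteColimits G] :
    F.mapDerivedCategory ⊣ G.mapDerivedCategory := by
  letI : CatCommSq (F.mapHomologicalComplex (ComplexShape.up ℤ)) DerivedCategory.Q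
      DerivedCategory.Q F.mapDerivedCategory := ⟨F.mapDerivedCategoryFactors.symm⟩
  letI : CatCommSq (G.mapHomologicalComplex (ComplexShape.up ℤ)) DerivedCategory.Q
      DerivedCategory.Q G.mapDerivedCategory := ⟨G.mapDerivedCategoryFactors.symm⟩
  exact (mapCochainComplexAdjunction adj).localization DerivedCategory.Q
    (HomologicalComplex.quasiIso A' (ComplexShape.up ℤ))
    DerivedCategory.Q (HomologicalComplex.quasiIso B' (ComplexShape.up ℤ))
    F.mapDerivedCategory G.mapDerivedCategory

/-- The derived functor of an exact functor commutes with the single functors. -/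
noncomputable def mapDerivedCategorySingleIso
    [HasDerivedCategory.{max u v} A'] [HasDerivedCategory.{max u v} B']
    (F : A' ⥤ B') [F.Additive]
    [PreservesFiniteLimits F] [PreservesFiniteColimits F] (X : A') :
    F.mapDerivedCategory.obj ((DerivedCategory.singleFunctor A' 0).obj X) ≅
      (DerivedCategory.singleFunctor B' 0).obj (F.obj X) :=
  F.mapDerivedCategory.mapIso
      (((SingleFunctors.evaluation _ _ 0).mapIso
        (DerivedCategory.singleFunctorsPostcompQIso A')).app X)
    ≪≫ F.mapDerivedCategoryFactors.app _
    ≪≫ DerivedCategory.Q.mapIso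
        ((HomologicalComplex.singleMapHomologicalComplex F (ComplexShape.up ℤ) 0).app X)
    ≪≫ (((SingleFunctors.evaluation _ _ 0).mapIso
        (DerivedCategory.singleFunctorsPostcompQIso B')).app (F.obj X)).symm

/-- Precomposition with an isomorphism, as an additive equivalence of hom groups. -/
noncomputable def homPrecompAddEquiv {D : Type*} [Category D] [Preadditive D]
    {X X' : D} (e : X ≅ X') (W : D) : (X' ⟶ W) ≃+ (X ⟶ W) where
  toFun g := e.hom ≫ g
  invFun g := e.inv ≫ g
  left_inv g := by simp
  right_inv g := by simp
  map_add' g g' := by simp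

/-- Postcomposition with an isomorphism, as an additive equivalence of hom groups. -/
noncomputable def homPostcompAddEquiv {D : Type*} [Category D] [Preadditive D]
    (W : D) {X X' : D} (e : X ≅ X') : (W ⟶ X) ≃+ (W ⟶ X') where
  toFun g := g ≫ e.hom
  invFun g := g ≫ e.inv
  left_inv g := by simp
  right_inv g := by simp
  map_add' g g' := by simp

/-- The hom equivalence of an adjunction whose right adjoint is additive, as an additive
equivalence. -/
noncomputable def adjHomAddEquiv {C' D' : Type*} [Category C'] [Category D']
    [Preadditive C'] [Preadditive D'] {F : C' ⥤ D'} {G : D' ⥤ C'} (adj : F ⊣ G) [G.Additive]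
    (X : C') (Y : D') : (F.obj X ⟶ Y) ≃+ (X ⟶ G.obj Y) :=
  { adj.homEquiv X Y with
    map_add' := fun f g => by
      simp [Adjunction.homEquiv_unit, Preadditive.comp_add] }

end AuxExt

/-- `Ext^k_B(i_*(X), Y) ≅ Ext^k_A(X, i^!(Y))`. -/
theorem ext_adjunction_iStar [EnoughProjectives A]
    (R : Recollement A B C) (hiS : IsExactFunctor R.iShriek)
    (X : A) (Y : B) (k : ℕ) (hk : 1 ≤ k) :
    Nonempty ((ExtGrp (R.iStar.obj X) Y k) ≃+ (ExtGrp X (R.iShriek.obj Y) k)) := by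
  letI : HasDerivedCategory.{max u v} A := HasDerivedCategory.standard A
  letI : HasDerivedCategory.{max u v} B := HasDerivedCategory.standard B
  letI : HasExt.{max u v} A := hasExt_of_hasDerivedCategory A
  letI : HasExt.{max u v} B := hasExt_of_hasDerivedCategory B
  haveI := R.iStar_exact.additive
  haveI := R.iShriek_additive
  haveI : PreservesFiniteLimits R.iStar := R.iStar_exact.preservesFiniteLimits'
  haveI : PreservesFiniteColimits R.iStar := R.iStar_exact.preservesFiniteColimits'
  haveI : PreservesFiniteLimits R.iShriek := hiS.preservesFiniteLimits'
  haveI : PreservesFiniteColimits R.iShriek := hiS.preservesFiniteColimits'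
  let adj' : R.iStar.mapDerivedCategory ⊣ R.iShriek.mapDerivedCategory :=
    mapDerivedCategoryAdjunction R.adj₂
  refine ⟨(Ext.homAddEquiv.trans
    ((homPrecompAddEquiv (mapDerivedCategorySingleIso R.iStar X)
        (((DerivedCategory.singleFunctor B 0).obj Y)⟦(k : ℤ)⟧)).trans
      ((adjHomAddEquiv adj' _ _).trans
        ((homPostcompAddEquiv _
            ((R.iShriek.mapDerivedCategory.commShiftIso (k : ℤ)).app
              ((DerivedCategory.singleFunctor B 0).obj Y))).trans
          ((homPostcompAddEquiv _
              ((shiftFunctor (DerivedCategory A) (k : ℤ)).mapIso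
                (mapDerivedCategorySingleIso R.iShriek Y))).trans
            Ext.homAddEquiv.symm)))))⟩

end PaperRecollement
end

section
/- Let (A, B, C) be a recollement of abelian categories. If i^* is exact, then for every object X of B the counit υ_X : j_!(j^*(X)) → X of the adjunction j_! ⊣ j^* and the unit ν_X : X → i_*(i^*(X)) of the adjunction i^* ⊣ i_* form a short exact sequence 0 → j_!(j^*(X)) → X → i_*(i^*(X)) → 0 in B. -/
open CategoryTheory CategoryTheory.Limits CategoryTheory.Abelian ZeroObject

universe v u

namespace PaperRecollement

variable {D : Type u} [Category.{v} D] [Abelian D]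

variable {A B C : Type u} [Category.{v} A] [Category.{v} B] [Category.{v} C]
  [Abelian A] [Abelian B] [Abelian C]

/-!
Both `i^*` and `j^*` are exact, so they commute with kernels, cokernels and homology, and an
object killed by both is zero (it lies in the image of `i_*` and `i^* i_* ≅ 𝟭`). Hence a short
complex in `B` is short exact as soon as its images under `i^*` and `j^*` are. Under `i^*` the
complex becomes `0 → i^* X ≅ i^* i_* i^* X` (as `i^* j_! = 0`), under `j^*` it becomes
`j^* j_! j^* X ≅ j^* X → 0` (as `j^* i_* = 0`); both are split short exact.
-/

lemma shortExact_of_shortExact_maps {C₀ C₁ C₂ : Type*} [Category* C₀] [Category* C₁]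
    [Category* C₂] [Abelian C₀] [Abelian C₁] [Abelian C₂] (F : C₀ ⥤ C₁) (G : C₀ ⥤ C₂)
    [F.PreservesZeroMorphisms] [G.PreservesZeroMorphisms]
    [F.PreservesHomology] [G.PreservesHomology]
    (hZ : ∀ Z : C₀, IsZero (F.obj Z) → IsZero (G.obj Z) → IsZero Z) {S : ShortComplex C₀}
    (hF : (S.map F).ShortExact) (hG : (S.map G).ShortExact) : S.ShortExact := by
  have : Mono (F.map S.f) := hF.mono_f
  have : Mono (G.map S.f) := hG.mono_f
  have : Epi (F.map S.g) := hF.epi_g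
  have : Epi (G.map S.g) := hG.epi_g
  refine .mk' ?exact ?mono ?epi
  case exact =>
    exact S.exact_iff_isZero_homology.2 <| hZ _
      (((S.map F).exact_iff_isZero_homology.1 hF.exact).of_iso (S.mapHomologyIso F).symm)
      (((S.map G).exact_iff_isZero_homology.1 hG.exact).of_iso (S.mapHomologyIso G).symm)
  case mono =>
    have := Functor.PreservesHomology.preservesKernels (F := F) S.f
    have := Functor.PreservesHomology.preservesKernels (F := G) S.f
    exact Preadditive.mono_of_isZero_kernel _ <| hZ _
      ((isZero_kernel_of_mono (F.map S.f)).of_iso (PreservesKernel.iso F S.f))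
      ((isZero_kernel_of_mono (G.map S.f)).of_iso (PreservesKernel.iso G S.f))
  case epi =>
    have := Functor.PreservesHomology.preservesCokernels (F := F) S.g
    have := Functor.PreservesHomology.preservesCokernels (F := G) S.g
    exact Preadditive.epi_of_isZero_cokernel _ <| hZ _
      ((isZero_cokernel_of_epi (F.map S.g)).of_iso (PreservesCokernel.iso F S.g))
      ((isZero_cokernel_of_epi (G.map S.g)).of_iso (PreservesCokernel.iso G S.g))

lemma IsExactFunctor.preservesHomology {A B : Type u} [Category.{v} A] [Category.{v} B]
    [Abelian A] [Abelian B] {F : A ⥤ B} [F.PreservesZeroMorphisms] (hF : IsExactFunctor F) :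
    F.PreservesHomology :=
  have := hF.additive
  (F.exact_tfae.out 0 2).1 fun (S : ShortComplex A) hS =>
    hF.preserves_shortExact S.f S.g S.zero _ hS

namespace Recollement

variable (R : Recollement A B C)

lemma isZero_jUStar_obj_iStar_obj (Y : A) : IsZero (R.jUStar.obj (R.iStar.obj Y)) :=
  let ⟨e⟩ := (R.essIm_iStar_eq_ker_jUStar _).1 ⟨Y, ⟨Iso.refl _⟩⟩
  (isZero_zero C).of_iso e

lemma hom_jShriek_obj_iStar_obj_eq_zero {Z : C} {Y : A}
    (f : R.jShriek.obj Z ⟶ R.iStar.obj Y) : f = 0 :=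
  (R.adj₃.homEquiv _ _).injective ((R.isZero_jUStar_obj_iStar_obj Y).eq_of_tgt _ _)

lemma isZero_iUStar_obj_jShriek_obj (Z : C) : IsZero (R.iUStar.obj (R.jShriek.obj Z)) :=
  (IsZero.iff_id_eq_zero _).2 <| (R.adj₁.homEquiv _ _).injective <|
    (R.hom_jShriek_obj_iStar_obj_eq_zero _).trans (R.hom_jShriek_obj_iStar_obj_eq_zero _).symm

lemma isZero_of_isZero_iUStar_obj_of_isZero_jUStar_obj {Z : B} (hi : IsZero (R.iUStar.obj Z))
    (hj : IsZero (R.jUStar.obj Z)) : IsZero Z := by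
  have := R.iStar_full
  have := R.iStar_faithful
  have := R.iStar_exact.additive
  obtain ⟨Y, ⟨e⟩⟩ := (R.essIm_iStar_eq_ker_jUStar Z).2 ⟨hj.isoZero⟩
  have hY : IsZero Y :=
    (hi.of_iso (R.iUStar.mapIso e)).of_iso (asIso (R.adj₁.counit.app Y)).symm
  exact (R.iStar.map_isZero hY).of_iso e.symm

lemma isIso_iUStar_map_unit_app (X : B) : IsIso (R.iUStar.map (R.adj₁.unit.app X)) := by
  have := R.iStar_full
  have := R.iStar_faithful
  infer_instance

lemma isIso_jUStar_map_counit_app (X : B) : IsIso (R.jUStar.map (R.adj₃.counit.app X)) := by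
  have := R.jShriek_full
  have := R.jShriek_faithful
  infer_instance

end Recollement

/-- if `i^*` is exact, `0 → j_! j^* X → X → i_* i^* X → 0` is exact. -/
theorem counit_unit_shortExact_of_iUStar_exact
    (R : Recollement A B C) (hiU : IsExactFunctor R.iUStar) (X : B) :
    ∃ w : R.adj₃.counit.app X ≫ R.adj₁.unit.app X = 0,
      (ShortComplex.mk (R.adj₃.counit.app X) (R.adj₁.unit.app X) w).ShortExact := by
  have := hiU.additive
  have := R.jUStar_exact.additive
  have := hiU.preservesHomology
  have := R.jUStar_exact.preservesHomology
  refine ⟨R.hom_jShriek_obj_iStar_obj_eq_zero _,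
    shortExact_of_shortExact_maps R.iUStar R.jUStar
      (fun _ => R.isZero_of_isZero_iUStar_obj_of_isZero_jUStar_obj) ?_ ?_⟩
  · exact (ShortComplex.Splitting.ofIsZeroOfIsIso _ (R.isZero_iUStar_obj_jShriek_obj _)
      (R.isIso_iUStar_map_unit_app X)).shortExact
  · exact (ShortComplex.Splitting.ofIsIsoOfIsZero _ (R.isIso_jUStar_map_counit_app X)
      (R.isZero_jUStar_obj_iStar_obj _)).shortExact

end PaperRecollement
end

section
/- Let (A, B, C) be a recollement of abelian categories in which A, B and C all have enough projectives and enough injectives, and suppose i^* and i^! are exact. If T is a pseudo cluster tilting subcategory of B such that every object of j_*(j^*(T)) lies in T and every object of i_*(i^*(T)) lies in T, then i^*(T) is a pseudo cluster tilting subcategory of A. -/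
open CategoryTheory CategoryTheory.Limits CategoryTheory.Abelian ZeroObject

universe v u

namespace PaperRecollement

variable {D : Type u} [Category.{v} D] [Abelian D]

variable {A B C : Type u} [Category.{v} A] [Category.{v} B] [Category.{v} C]
  [Abelian A] [Abelian B] [Abelian C]

/-!
Since `i_*` is fully faithful, the counit `i^* i_* ⟶ 𝟭` is an isomorphism, so applying the exact
functor `i^*` to the two `T`-approximation sequences of `i_* X` gives short exact sequences ending
or starting at `X` with terms in `i^*(T)`. The adjunction `i^* ⊣ i_*` transports the approximation
properties: a map `X ⟶ i^* T'` is adjoint to `i_* X ⟶ i_* i^* T'` (whose target is in `T`, by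
assumption), and a map `i^* T' ⟶ X` is adjoint to `T' ⟶ i_* X`.
-/

def HasLeftApproxSES (T : Set D) (C : D) : Prop :=
  ∃ (T₁ T₂ : D) (f : C ⟶ T₁) (g : T₁ ⟶ T₂) (w : f ≫ g = 0),
    (ShortComplex.mk f g w).ShortExact ∧ T₁ ∈ T ∧ T₂ ∈ T ∧
      ∀ T' ∈ T, ∀ h : C ⟶ T', ∃ k : T₁ ⟶ T', f ≫ k = h

def HasRightApproxSES (T : Set D) (C : D) : Prop :=
  ∃ (T₃ T₄ : D) (f : T₃ ⟶ T₄) (g : T₄ ⟶ C) (w : f ≫ g = 0),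
    (ShortComplex.mk f g w).ShortExact ∧ T₃ ∈ T ∧ T₄ ∈ T ∧
      ∀ T' ∈ T, ∀ h : T' ⟶ C, ∃ k : T' ⟶ T₄, k ≫ g = h

section imgClass

variable {𝒞 𝒟 : Type u} [Category.{v} 𝒞] [Category.{v} 𝒟] (F : 𝒞 ⥤ 𝒟) {S : Set 𝒞}

lemma obj_mem_imgClass {X : 𝒞} (hX : X ∈ S) : F.obj X ∈ imgClass F S :=
  ⟨X, hX, ⟨Iso.refl _⟩⟩

lemma mem_imgClass_of_iso {X Y : 𝒟} (hX : X ∈ imgClass F S) (e : X ≅ Y) : Y ∈ imgClass F S :=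
  let ⟨X₀, hX₀, ⟨e₀⟩⟩ := hX
  ⟨X₀, hX₀, ⟨e₀ ≪≫ e⟩⟩

variable [Abelian 𝒞] [Abelian 𝒟] [F.Additive]

lemma zero_mem_imgClass (h : (0 : 𝒞) ∈ S) : (0 : 𝒟) ∈ imgClass F S :=
  ⟨0, h, ⟨F.mapZeroObject⟩⟩

lemma biprod_mem_imgClass (hS : ∀ ⦃X Y : 𝒞⦄, X ∈ S → Y ∈ S → (X ⊞ Y) ∈ S) {X Y : 𝒟}
    (hX : X ∈ imgClass F S) (hY : Y ∈ imgClass F S) : (X ⊞ Y) ∈ imgClass F S :=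
  let ⟨X₀, hX₀, ⟨eX⟩⟩ := hX
  let ⟨Y₀, hY₀, ⟨eY⟩⟩ := hY
  have := preservesBinaryBiproducts_of_preservesBiproducts F
  ⟨X₀ ⊞ Y₀, hS hX₀ hY₀, ⟨F.mapBiprod X₀ Y₀ ≪≫ biprod.mapIso eX eY⟩⟩

end imgClass

lemma IsExactFunctor.map_shortExact_s18 {E : Type u} [Category.{v} E] [Abelian E] {F : D ⥤ E}
    (hF : IsExactFunctor F) {X Y Z : D} {f : X ⟶ Y} {g : Y ⟶ Z} {w : f ≫ g = 0}
    (h : (ShortComplex.mk f g w).ShortExact) :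
    (ShortComplex.mk (F.map f) (F.map g)
      (by have := hF.additive; rw [← F.map_comp, w, F.map_zero])).ShortExact :=
  hF.preserves_shortExact f g w _ h

section Reflective

variable {L : B ⥤ A} {G : A ⥤ B} (adj : L ⊣ G) [G.Full] [G.Faithful]
  (hL : IsExactFunctor L) {T : Set B}
include adj hL

lemma HasLeftApproxSES.of_reflective (hT : imgClass G (imgClass L T) ⊆ T) {X : A}
    (hX : HasLeftApproxSES T (G.obj X)) : HasLeftApproxSES (imgClass L T) X := by
  have := hL.additive
  obtain ⟨T₁, T₂, f, g, w, hses, hT₁, hT₂, happrox⟩ := hX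
  have hses' := hL.map_shortExact_s18 hses
  have hzero : L.map f ≫ L.map g = 0 := by rw [← L.map_comp, w, L.map_zero]
  refine ⟨L.obj T₁, L.obj T₂, inv (adj.counit.app X) ≫ L.map f, L.map g,
    by rw [Category.assoc, hzero, comp_zero], ShortComplex.shortExact_of_iso ?_ hses',
    obj_mem_imgClass L hT₁, obj_mem_imgClass L hT₂, ?_⟩
  · exact ShortComplex.isoMk (asIso (adj.counit.app X)) (Iso.refl _) (Iso.refl _)
      (by simp) (by simp)
  rintro Y ⟨Y₀, hY₀, ⟨e⟩⟩ h
  obtain ⟨k, hk⟩ := happrox _ (hT (obj_mem_imgClass G (obj_mem_imgClass L hY₀)))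
    (G.map (h ≫ e.inv))
  refine ⟨L.map k ≫ adj.counit.app (L.obj Y₀) ≫ e.hom, ?_⟩
  have hnat := adj.counit.naturality (h ≫ e.inv)
  simp only [Functor.comp_map, Functor.id_map] at hnat
  simp only [Category.assoc]
  rw [← L.map_comp_assoc, hk, reassoc_of% hnat]
  simp

lemma HasRightApproxSES.of_reflective {X : A} (hX : HasRightApproxSES T (G.obj X)) :
    HasRightApproxSES (imgClass L T) X := by
  have := hL.additive
  obtain ⟨T₃, T₄, f, g, w, hses, hT₃, hT₄, happrox⟩ := hX
  have hses' := hL.map_shortExact_s18 hses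
  have hzero : L.map f ≫ L.map g = 0 := by rw [← L.map_comp, w, L.map_zero]
  refine ⟨L.obj T₃, L.obj T₄, L.map f, L.map g ≫ adj.counit.app X,
    by rw [← Category.assoc, hzero, zero_comp], ShortComplex.shortExact_of_iso ?_ hses',
    obj_mem_imgClass L hT₃, obj_mem_imgClass L hT₄, ?_⟩
  · exact ShortComplex.isoMk (Iso.refl _) (Iso.refl _) (asIso (adj.counit.app X))
      (by simp) (by simp)
  rintro Y ⟨Y₀, hY₀, ⟨e⟩⟩ h
  obtain ⟨k, hk⟩ := happrox _ hY₀ (adj.homEquiv _ _ (e.hom ≫ h))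
  refine ⟨e.inv ≫ L.map k, ?_⟩
  rw [Category.assoc, ← L.map_comp_assoc, hk, ← adj.homEquiv_counit, Equiv.symm_apply_apply,
    Iso.inv_hom_id_assoc]

theorem IsPseudoClusterTilting.imgClass_of_reflective (hT : IsPseudoClusterTilting T)
    (hGLT : imgClass G (imgClass L T) ⊆ T) : IsPseudoClusterTilting (imgClass L T) :=
  have := hL.additive
  { iso_closed := fun _ _ hY ⟨e⟩ => mem_imgClass_of_iso L hY e
    zero_mem := zero_mem_imgClass L hT.zero_mem
    biprod_mem := fun _ _ => biprod_mem_imgClass L hT.biprod_mem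
    left_approx := fun _ => HasLeftApproxSES.of_reflective adj hL hGLT (hT.left_approx _)
    right_approx := fun _ => HasRightApproxSES.of_reflective adj hL (hT.right_approx _) }

end Reflective

theorem pseudoClusterTilting_iUStar_general
    (R : Recollement A B C)
    (hiU : IsExactFunctor R.iUStar)
    (T : Set B) (hT : IsPseudoClusterTilting T)
    (hiT : imgClass R.iStar (imgClass R.iUStar T) ⊆ T) :
    IsPseudoClusterTilting (imgClass R.iUStar T) :=
  have := R.iStar_full
  have := R.iStar_faithful
  hT.imgClass_of_reflective R.adj₁ hiU hiT

/-- `i^*` of a pseudo cluster tilting subcategory is pseudo cluster tilting. -/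
theorem pseudoClusterTilting_iUStar
    [EnoughProjectives A] [EnoughInjectives A] [EnoughProjectives B] [EnoughInjectives B]
    [EnoughProjectives C] [EnoughInjectives C]
    (R : Recollement A B C)
    (hiU : IsExactFunctor R.iUStar) (hiS : IsExactFunctor R.iShriek)
    (T : Set B) (hT : IsPseudoClusterTilting T)
    (hjT : imgClass R.jStar (imgClass R.jUStar T) ⊆ T)
    (hiT : imgClass R.iStar (imgClass R.iUStar T) ⊆ T) :
    IsPseudoClusterTilting (imgClass R.iUStar T) :=
  pseudoClusterTilting_iUStar_general R hiU T hT hiT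
end PaperRecollement
end
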